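/- For a connected finite graph H with linearly ordered edges and edge weights γ, the connected-spanning-subgraph generating function satisfies [q^1] Z_T(H;q,γ) = Σ_{T ∈ T(H)} (∏_{e∈E(T)} γ_e) · (∏_{e externally active w.r.t. T} (1 + γ_e)), where T(H) is the set of spanning trees of H. -/

import Mathlib

open scoped Classical
open Finset

structure MGraph (V E : Type) where
  ends : E → Sym2 V

namespace MGraph

variable {V E S R : Type} [Fintype V] [Fintype E]

/-- Two vertices are joined by an edge of `A`. -/
def adjRel (G : MGraph V E) (A : Finset E) (u v : V) : Prop :=
  ∃ e ∈ A, G.ends e = s(u, v)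

/-- The setoid on vertices whose classes are the connected components of the
spanning subgraph `(V, A)`. -/
def compSetoid (G : MGraph V E) (A : Finset E) : Setoid V :=
  ⟨Relation.EqvGen (G.adjRel A), Relation.EqvGen.is_equivalence _⟩

/-- The connected components of the spanning subgraph `(V, A)`. -/
def Comp (G : MGraph V E) (A : Finset E) : Type := Quotient (G.compSetoid A)

noncomputable instance (G : MGraph V E) (A : Finset E) : Fintype (G.Comp A) :=
  @Quotient.fintype V _ (G.compSetoid A) (Classical.decRel _)

/-- `k(A)`: the number of connected components of the spanning subgraph `(V, A)`. -/
noncomputable def kA (G : MGraph V E) (A : Finset E) : ℕ := Nat.card (G.Comp A)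

/-- `u` and `v` are connected in the spanning subgraph `(V, A)`. -/
def Connects (G : MGraph V E) (A : Finset E) (u v : V) : Prop :=
  Relation.EqvGen (G.adjRel A) u v

/-- The endpoints of `e` are connected in the spanning subgraph `(V, A)`. -/
def EndsConnected (G : MGraph V E) (A : Finset E) (e : E) : Prop :=
  ∃ u v, G.ends e = s(u, v) ∧ G.Connects A u v

def IsLoop (G : MGraph V E) (e : E) : Prop := (G.ends e).IsDiag

/-- `(V, A)` is a forest (acyclic spanning subgraph): every edge of `A` is a bridge of it. -/
def IsForest (G : MGraph V E) (A : Finset E) : Prop :=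
  ∀ e ∈ A, ¬ G.EndsConnected (A.erase e) e

/-- All vertices are pairwise connected using edges of `A`. -/
def ConnectsAll (G : MGraph V E) (A : Finset E) : Prop := ∀ u v, G.Connects A u v

/-- A maximal spanning forest: a forest restricting to a spanning tree of each
connected component of `G`. -/
def IsSpanningTree (G : MGraph V E) (T : Finset E) : Prop :=
  G.IsForest T ∧ ∀ u v, G.Connects T u v ↔ G.Connects Finset.univ u v

/-- `e ∈ T` is internally active: `e` is minimal in the cut
`{f : (T - e) ∪ {f} ∈ 𝒯(G)}`. -/
def IntActive [LinearOrder E] (G : MGraph V E) (T : Finset E) (e : E) : Prop :=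
  e ∈ T ∧ ∀ f, G.IsSpanningTree (insert f (T.erase e)) → e ≤ f

/-- The edge set of the unique cycle of `T ∪ {e}` (when it exists):
`e` together with those `f ∈ T` whose removal disconnects the ends of `e`. -/
noncomputable def cycleEdges (G : MGraph V E) (T : Finset E) (e : E) : Finset E :=
  insert e (T.filter fun f => ¬ G.EndsConnected (T.erase f) e)

/-- `e ∉ T` is externally active: `T ∪ {e}` contains a cycle through `e` and
`e` is the minimal edge of that cycle. -/
def ExtActive [LinearOrder E] (G : MGraph V E) (T : Finset E) (e : E) : Prop :=
  e ∉ T ∧ G.EndsConnected T e ∧ ∀ f ∈ G.cycleEdges T e, e ≤ f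

/-- The vertex set of the component `c` of `(V, A)`. -/
noncomputable def compVerts (G : MGraph V E) (A : Finset E) (c : G.Comp A) : Finset V :=
  Finset.univ.filter fun v => (Quotient.mk (G.compSetoid A) v) = c

/-- The total vertex weight of the component `c` of `(V, A)`. -/
noncomputable def compWeight [AddCommMonoid S] (G : MGraph V E) (A : Finset E)
    (ω : V → S) (c : G.Comp A) : S :=
  ∑ v ∈ G.compVerts A c, ω v

/-- The V-polynomial, defined by its state sum. -/
noncomputable def Vpoly [AddCommMonoid S] [CommRing R] (G : MGraph V E)
    (ω : V → S) (γ : E → R) : MvPolynomial S R :=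
  ∑ A : Finset E, (∏ c : G.Comp A, MvPolynomial.X (G.compWeight A ω c)) *
    MvPolynomial.C (∏ e ∈ A, γ e)

/-- The multivariate Tutte polynomial `Z_T(G; q, γ)` as a polynomial in `q`. -/
noncomputable def ZT [CommRing R] (G : MGraph V E) (γ : E → R) : Polynomial R :=
  ∑ A : Finset E, Polynomial.X ^ (G.kA A) * Polynomial.C (∏ e ∈ A, γ e)

/-- Deletion of the edge `e`. -/
def del (G : MGraph V E) (e : E) : MGraph V {f : E // f ≠ e} := ⟨fun f => G.ends f.1⟩

/-- Contraction of the edge `e`: vertices are the components of `(V, {e})`. -/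
noncomputable def contract (G : MGraph V E) (e : E) : MGraph (G.Comp {e}) {f : E // f ≠ e} :=
  ⟨fun f => (G.ends f.1).map (Quotient.mk (G.compSetoid {e}))⟩

/-- The forest `T` with the edges of `B` contracted: vertices are the components
of `(V, B)` and edges are `T \ B`. -/
noncomputable def contractIn (G : MGraph V E) (T B : Finset E) :
    MGraph (G.Comp B) ↥(T \ B : Finset E) :=
  ⟨fun f => (G.ends f.1).map (Quotient.mk (G.compSetoid B))⟩

/-- The edges of `G` with both ends inside `P`. -/
noncomputable def edgesIn (G : MGraph V E) (P : Finset V) : Finset E :=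
  Finset.univ.filter fun e => ∀ v ∈ G.ends e, v ∈ P

/-- The subgraph of `G` induced by the vertex set `P`. -/
noncomputable def induce (G : MGraph V E) (P : Finset V) : MGraph ↥P ↥(G.edgesIn P) :=
  ⟨fun e => (G.ends e.1).pmap (fun v hv => (⟨v, hv⟩ : ↥P))
    (by have he := e.2; simp only [edgesIn, Finset.mem_filter] at he; exact he.2)⟩

/-- The block `B` induces a connected subgraph of `G`. -/
def BlockConnected (G : MGraph V E) (B : Finset V) : Prop :=
  ∀ u ∈ B, ∀ v ∈ B, Relation.EqvGen (G.adjRel (G.edgesIn B)) u v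

/-- A connected partition of `V(G)`: every vertex lies in exactly one block,
blocks are nonempty, and each block induces a connected subgraph. -/
def IsConnectedPartition (G : MGraph V E) (P : Finset (Finset V)) : Prop :=
  (∀ B ∈ P, B.Nonempty) ∧ (∀ v : V, ∃! B, B ∈ P ∧ v ∈ B) ∧ ∀ B ∈ P, G.BlockConnected B

/-- The partition `Π(A)` of `V(G)` into the components of `(V, A)`. -/
noncomputable def partitionOf (G : MGraph V E) (A : Finset E) : Finset (Finset V) :=
  Finset.univ.image fun c : G.Comp A => G.compVerts A c

/-- The internally inactive edges of the spanning tree `T`. -/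
noncomputable def intInactives [LinearOrder E] (G : MGraph V E) (T : Finset E) : Finset E :=
  T.filter fun e => ¬ G.IntActive T e

/-- The internally active edges of the spanning tree `T`. -/
noncomputable def intActives [LinearOrder E] (G : MGraph V E) (T : Finset E) : Finset E :=
  T.filter fun e => G.IntActive T e

/-- The externally active edges w.r.t. the spanning tree / forest `T`. -/
noncomputable def extActives [LinearOrder E] (G : MGraph V E) (T : Finset E) : Finset E :=
  Finset.univ.filter fun e => G.ExtActive T e

/-- Kronecker delta `δ(σ_i, σ_j)` for the two ends of the edge `e`. -/
noncomputable def edgeDelta (G : MGraph V E) {q : ℕ} (σ : V → Fin q) (e : E) : ℂ :=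
  Sym2.lift ⟨fun u v => if σ u = σ v then 1 else 0, fun u v => by simp [eq_comm]⟩ (G.ends e)

/-- The Potts partition function with variable interactions `J` and
field vectors `M`. -/
noncomputable def Zext (G : MGraph V E) (q : ℕ) (β : ℂ) (J : E → ℂ) (M : V → Fin q → ℂ) : ℂ :=
  ∑ σ : V → Fin q, Complex.exp (β * ((∑ e : E, J e * G.edgeDelta σ e) +
    ∑ v : V, ∑ α : Fin q, M v α * (if α = σ v then 1 else 0)))

/-- The Potts partition function with constant interaction `J` and constant
field `H` favouring the first spin. -/
noncomputable def ZconstField (G : MGraph V E) (q : ℕ) (β J H : ℂ) : ℂ :=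
  ∑ σ : V → Fin q, Complex.exp (β * (J * (∑ e : E, G.edgeDelta σ e) +
    H * ∑ v : V, (if (σ v : ℕ) = 0 then (1 : ℂ) else 0)))

/-- The zero-field Potts partition function with constant interaction `J`. -/
noncomputable def Zzero (G : MGraph V E) (q : ℕ) (β J : ℂ) : ℂ :=
  ∑ σ : V → Fin q, Complex.exp (β * J * ∑ e : E, G.edgeDelta σ e)

end MGraph

/-!
The coefficient of `q` in `Z_T` is the total weight of the connected spanning subgraphs `A`.
Scanning `A` in decreasing edge order and keeping each edge whose ends are not yet joined by
larger edges of `A` (Kruskal's algorithm) produces a spanning tree `T ⊆ A`. An edge of `A \ T` is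
discarded precisely because larger edges of `T` close a cycle through it, i.e. it is externally
active for `T`; conversely, adding externally active edges to a spanning tree `T` does not change
the tree the scan produces. Hence `A ↦ (T, A \ T)` is a bijection onto the pairs of a spanning tree
`T` and a set `S ⊆ EA(T)`, and summing `γ^T γ^S` over `S` gives `γ^T ∏_{e ∈ EA(T)} (1 + γ_e)`.
-/

namespace MGraph

open Relation

variable {V E R : Type} {G : MGraph V E} {A B C P T : Finset E} {u v w x y : V} {e f : E}

theorem exists_ends_eq (G : MGraph V E) (e : E) : ∃ x y, G.ends e = s(x, y) :=
  Sym2.ind (fun x y => ⟨x, y, rfl⟩) (G.ends e)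

namespace Connects

theorem refl (G : MGraph V E) (A : Finset E) (u : V) : G.Connects A u u := EqvGen.refl u

theorem symm (h : G.Connects A u v) : G.Connects A v u := EqvGen.symm _ _ h

theorem trans (h : G.Connects A u v) (h' : G.Connects A v w) : G.Connects A u w :=
  EqvGen.trans _ _ _ h h'

theorem of_ends_eq (he : e ∈ A) (hxy : G.ends e = s(x, y)) : G.Connects A x y :=
  EqvGen.rel _ _ ⟨e, he, hxy⟩

theorem mono (h : G.Connects A u v) (hAB : A ⊆ B) : G.Connects B u v :=
  EqvGen.mono (fun _ _ ⟨e, he, hxy⟩ => ⟨e, hAB he, hxy⟩) _ _ h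

end Connects

theorem endsConnected_iff (hxy : G.ends e = s(x, y)) : G.EndsConnected A e ↔ G.Connects A x y := by
  refine ⟨fun ⟨u, v, huv, h⟩ => ?_, fun h => ⟨x, y, hxy, h⟩⟩
  rcases Sym2.eq_iff.1 (huv.symm.trans hxy) with ⟨rfl, rfl⟩ | ⟨rfl, rfl⟩
  exacts [h, h.symm]

theorem EndsConnected.mono (h : G.EndsConnected A e) (hAB : A ⊆ B) : G.EndsConnected B e :=
  let ⟨x, y, hxy, hc⟩ := h
  ⟨x, y, hxy, hc.mono hAB⟩

theorem Connects.of_forall_endsConnected (h : G.Connects A u v)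
    (hAB : ∀ e ∈ A, G.EndsConnected B e) : G.Connects B u v := by
  induction h with
  | rel x y hxy =>
    obtain ⟨e, he, hends⟩ := hxy
    exact (endsConnected_iff hends).1 (hAB e he)
  | refl x => exact .refl G B x
  | symm x y _ ih => exact ih.symm
  | trans x y z _ _ ih₁ ih₂ => exact ih₁.trans ih₂

theorem Connects.of_insert (hxy : G.ends e = s(x, y)) (h : G.Connects (insert e A) u v) :
    G.Connects A u v ∨ G.Connects A u x ∧ G.Connects A y v ∨
      G.Connects A u y ∧ G.Connects A x v := by
  induction h with
  | rel a b hab =>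
    obtain ⟨f, hf, hfab⟩ := hab
    rcases mem_insert.1 hf with rfl | hf
    · rcases Sym2.eq_iff.1 (hfab.symm.trans hxy) with ⟨rfl, rfl⟩ | ⟨rfl, rfl⟩
      · exact .inr (.inl ⟨.refl G A a, .refl G A b⟩)
      · exact .inr (.inr ⟨.refl G A a, .refl G A b⟩)
    · exact .inl (.of_ends_eq hf hfab)
  | refl a => exact .inl (.refl G A a)
  | symm a b _ ih => grind [Connects.symm]
  | trans a b c _ _ ih₁ ih₂ => grind [Connects.trans]

theorem endsConnected_of_not_connects_erase (h : G.Connects B u v)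
    (hf : ¬ G.Connects (B.erase f) u v) (hBC : B.erase f ⊆ C) (hC : G.Connects C u v) :
    G.EndsConnected C f := by
  obtain ⟨x, y, hxy⟩ := G.exists_ends_eq f
  rw [endsConnected_iff hxy]
  rcases (h.mono (insert_erase_subset f B)).of_insert hxy with h' | ⟨hux, hyv⟩ | ⟨huy, hxv⟩
  · exact absurd h' hf
  · exact ((hux.mono hBC).symm.trans hC).trans (hyv.mono hBC).symm
  · exact ((hxv.mono hBC).trans hC.symm).trans (huy.mono hBC)

theorem exists_minimal_connects_subset (h : G.Connects B u v) :
    ∃ P ⊆ B, G.Connects P u v ∧ ∀ f ∈ P, ¬ G.Connects (P.erase f) u v := by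
  induction B using Finset.strongInduction with
  | _ B ih =>
    by_cases hf : ∃ f ∈ B, G.Connects (B.erase f) u v
    · obtain ⟨f, hfB, hc⟩ := hf
      obtain ⟨P, hPB, hP⟩ := ih _ (erase_ssubset hfB) hc
      exact ⟨P, hPB.trans (erase_subset f B), hP⟩
    · push Not at hf
      exact ⟨B, subset_rfl, h, hf⟩

theorem IsForest.not_connects_erase (hT : G.IsForest T) (hPT : P ⊆ T) (hP : G.Connects P u v)
    (hfP : f ∈ P) (hPf : ¬ G.Connects (P.erase f) u v) : ¬ G.Connects (T.erase f) u v :=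
  fun hTf => hT f (hPT hfP)
    (endsConnected_of_not_connects_erase hP hPf (erase_subset_erase f hPT) hTf)

/-- An edge `e` together with a minimal set of edges joining its ends forms a cycle. -/
theorem endsConnected_insert_erase (hxy : G.ends e = s(x, y)) (heP : e ∉ P)
    (hP : G.Connects P x y) (hPmin : ∀ f ∈ P, ¬ G.Connects (P.erase f) x y)
    (hf : f ∈ insert e P) : G.EndsConnected ((insert e P).erase f) f := by
  rcases mem_insert.1 hf with rfl | hfP
  · rwa [erase_insert heP, endsConnected_iff hxy]
  · have hfe : f ≠ e := ne_of_mem_of_not_mem hfP heP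
    refine endsConnected_of_not_connects_erase hP (hPmin f hfP) ?_ ?_
    · rw [erase_insert_of_ne hfe.symm]
      exact subset_insert e _
    · exact .of_ends_eq (mem_erase.2 ⟨hfe.symm, mem_insert_self e P⟩) hxy

section Greedy

variable [LinearOrder E]

-- The definitions above build `Finset.erase` from classical decidable equality, not from the order.
attribute [local instance 2000] Classical.decEq

noncomputable def greedyForest (G : MGraph V E) (A : Finset E) : Finset E :=
  A.filter fun e => ¬ G.EndsConnected (A.filter (e < ·)) e

theorem greedyForest_subset (G : MGraph V E) (A : Finset E) : G.greedyForest A ⊆ A :=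
  filter_subset _ _

theorem endsConnected_greedyForest [Finite E] (he : e ∈ A) :
    G.EndsConnected (G.greedyForest A) e := by
  induction e using WellFoundedGT.induction with
  | _ e ih =>
    by_cases hkept : e ∈ G.greedyForest A
    · obtain ⟨x, y, hxy⟩ := G.exists_ends_eq e
      exact ⟨x, y, hxy, .of_ends_eq hkept hxy⟩
    · obtain ⟨x, y, hxy, hc⟩ : G.EndsConnected (A.filter (e < ·)) e := by
        by_contra hc
        exact hkept (mem_filter.2 ⟨he, hc⟩)
      refine ⟨x, y, hxy, hc.of_forall_endsConnected fun f hf => ?_⟩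
      exact ih f (mem_filter.1 hf).2 (mem_filter.1 hf).1

theorem ConnectsAll.greedyForest [Finite E] (h : G.ConnectsAll A) :
    G.ConnectsAll (G.greedyForest A) := fun u v =>
  (h u v).of_forall_endsConnected fun _ he => endsConnected_greedyForest he

/-- Kruskal's algorithm never keeps the smallest edge of a cycle. -/
theorem exists_min_not_mem_greedyForest (hxy : G.ends e = s(x, y)) (heA : e ∈ A) (hPA : P ⊆ A)
    (heP : e ∉ P) (hP : G.Connects P x y) (hPmin : ∀ f ∈ P, ¬ G.Connects (P.erase f) x y) :
    ∃ g ∈ insert e P, (∀ f ∈ insert e P, g ≤ f) ∧ g ∉ G.greedyForest A := by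
  set C := insert e P
  have hC : C.Nonempty := insert_nonempty e P
  refine ⟨C.min' hC, C.min'_mem hC, C.min'_le, fun hkept => (mem_filter.1 hkept).2 ?_⟩
  refine (endsConnected_insert_erase hxy heP hP hPmin (C.min'_mem hC)).mono fun f hf => ?_
  obtain ⟨hfg, hfC⟩ := mem_erase.1 hf
  exact mem_filter.2 ⟨insert_subset heA hPA hfC, lt_of_le_of_ne (C.min'_le f hfC) hfg.symm⟩

theorem isForest_greedyForest (G : MGraph V E) (A : Finset E) :
    G.IsForest (G.greedyForest A) := by
  intro e he hcyc
  obtain ⟨x, y, hxy⟩ := G.exists_ends_eq e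
  obtain ⟨P, hPT, hP, hPmin⟩ := exists_minimal_connects_subset ((endsConnected_iff hxy).1 hcyc)
  have hPA := hPT.trans ((erase_subset e _).trans (G.greedyForest_subset A))
  obtain ⟨g, hg, -, hgT⟩ := exists_min_not_mem_greedyForest hxy (G.greedyForest_subset A he) hPA
    (fun heP => (mem_erase.1 (hPT heP)).1 rfl) hP hPmin
  rcases mem_insert.1 hg with rfl | hgP
  exacts [hgT he, hgT (mem_of_mem_erase (hPT hgP))]

theorem extActive_greedyForest [Finite E] (heA : e ∈ A) (he : e ∉ G.greedyForest A) :
    G.ExtActive (G.greedyForest A) e := by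
  refine ⟨he, endsConnected_greedyForest heA, fun f hf => ?_⟩
  rcases mem_insert.1 hf with rfl | hf
  · exact le_rfl
  obtain ⟨hfT, hcut⟩ := mem_filter.1 hf
  by_contra! hfe
  obtain ⟨x, y, hxy⟩ := G.exists_ends_eq e
  obtain ⟨P, hPT, hP, hPmin⟩ :=
    exists_minimal_connects_subset ((endsConnected_iff hxy).1 (endsConnected_greedyForest heA))
  have hfP : f ∈ P := by
    by_contra hfP
    exact hcut ((endsConnected_iff hxy).2 (hP.mono fun g hg =>
      mem_erase.2 ⟨ne_of_mem_of_not_mem hg hfP, hPT hg⟩))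
  obtain ⟨g, hg, hmin, hgT⟩ := exists_min_not_mem_greedyForest hxy heA
    (hPT.trans (G.greedyForest_subset A)) (fun heP => he (hPT heP)) hP hPmin
  rcases mem_insert.1 hg with rfl | hgP
  exacts [(hmin f (mem_insert_of_mem hfP)).not_gt hfe, hgT (hPT hgP)]

theorem IsForest.endsConnected_filter_lt (hT : G.IsForest T) (he : G.ExtActive T e) :
    G.EndsConnected (T.filter (e < ·)) e := by
  obtain ⟨heT, hcon, hmin⟩ := he
  obtain ⟨x, y, hxy⟩ := G.exists_ends_eq e
  obtain ⟨P, hPT, hP, hPmin⟩ := exists_minimal_connects_subset ((endsConnected_iff hxy).1 hcon)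
  refine (endsConnected_iff hxy).2 (hP.mono fun f hfP => mem_filter.2 ⟨hPT hfP, ?_⟩)
  have hcut := hT.not_connects_erase hPT hP hfP (hPmin f hfP)
  refine lt_of_le_of_ne (hmin f (mem_insert_of_mem (mem_filter.2 ⟨hPT hfP, ?_⟩))) ?_
  · rwa [endsConnected_iff hxy]
  · rintro rfl
    exact heT (hPT hfP)

theorem greedyForest_eq (hT : G.IsForest T) (hTA : T ⊆ A)
    (hext : ∀ e ∈ A, e ∉ T → G.ExtActive T e) : G.greedyForest A = T := by
  have hlarger (e) (he : e ∈ A) (heT : e ∉ T) : G.EndsConnected (T.filter (e < ·)) e :=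
    hT.endsConnected_filter_lt (hext e he heT)
  refine Subset.antisymm (fun e he => ?_) (fun e he => mem_filter.2 ⟨hTA he, fun hcyc => ?_⟩)
  · obtain ⟨heA, hkept⟩ := mem_filter.1 he
    by_contra heT
    exact hkept ((hlarger e heA heT).mono (filter_subset_filter _ hTA))
  · obtain ⟨x, y, hxy, hc⟩ := hcyc
    have hlift : G.Connects (T.filter (e < ·)) x y := hc.of_forall_endsConnected fun f hf => by
      obtain ⟨hfA, hef⟩ := mem_filter.1 hf
      by_cases hfT : f ∈ T
      · obtain ⟨a, b, hab⟩ := G.exists_ends_eq f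
        exact ⟨a, b, hab, .of_ends_eq (mem_filter.2 ⟨hfT, hef⟩) hab⟩
      · exact (hlarger f hfA hfT).mono (monotone_filter_right _ fun _ _ => hef.trans)
    exact hT e he ⟨x, y, hxy, hlift.mono fun g hg => mem_erase.2
      ⟨(mem_filter.1 hg).2.ne', (mem_filter.1 hg).1⟩⟩

end Greedy

theorem kA_eq_one_iff [Nonempty V] : G.kA A = 1 ↔ G.ConnectsAll A := by
  rw [kA, Nat.card_eq_one_iff_unique]
  refine ⟨fun ⟨h, _⟩ u v => Quotient.exact (h.elim _ _), fun h => ⟨⟨?_⟩, ⟨⟦Classical.arbitrary V⟧⟩⟩⟩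
  exact Quotient.ind₂ fun u v => Quotient.sound (h u v)

theorem coeff_one_ZT [Fintype E] [Nonempty V] [CommRing R] (G : MGraph V E) (γ : E → R) :
    (G.ZT γ).coeff 1 = ∑ A ∈ univ.filter G.ConnectsAll, ∏ e ∈ A, γ e := by
  rw [ZT, Polynomial.finsetSum_coeff, sum_filter]
  refine sum_congr rfl fun A _ => ?_
  rw [mul_comm, Polynomial.coeff_C_mul, Polynomial.coeff_X_pow]
  simp only [@eq_comm ℕ 1, kA_eq_one_iff, mul_ite, mul_one, mul_zero]

variable [LinearOrder E]

theorem disjoint_extActives [Fintype E] (G : MGraph V E) (T : Finset E) :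
    Disjoint T (G.extActives T) :=
  disjoint_right.2 fun _ he => (mem_filter.1 he).2.1

theorem sum_prod_filter_greedyForest_eq [Fintype E] [CommRing R] (hT : G.IsForest T)
    (hconn : G.ConnectsAll T) (γ : E → R) :
    ∑ A ∈ univ.filter G.ConnectsAll with G.greedyForest A = T, ∏ e ∈ A, γ e =
      (∏ e ∈ T, γ e) * ∏ e ∈ G.extActives T, (1 + γ e) := by
  have hdisj (S) (hS : S ∈ (G.extActives T).powerset) : Disjoint T S :=
    (G.disjoint_extActives T).mono_right (mem_powerset.1 hS)
  calc ∑ A ∈ univ.filter G.ConnectsAll with G.greedyForest A = T, ∏ e ∈ A, γ e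
      = ∑ S ∈ (G.extActives T).powerset, ∏ e ∈ T ∪ S, γ e := by
        have hTA (A) (hA : A ∈ (univ.filter G.ConnectsAll).filter (G.greedyForest · = T)) :
            T ⊆ A :=
          (mem_filter.1 hA).2 ▸ G.greedyForest_subset A
        refine sum_nbij' (· \ T) (T ∪ ·) (fun A hA => ?_) (fun S hS => ?_)
          (fun A hA => union_sdiff_of_subset (hTA A hA))
          (fun S hS => union_sdiff_cancel_left (hdisj S hS))
          (fun A hA => by rw [union_sdiff_of_subset (hTA A hA)])
        · obtain ⟨hA, rfl⟩ := mem_filter.1 hA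
          refine mem_powerset.2 fun e he => mem_filter.2 ⟨mem_univ e, ?_⟩
          exact extActive_greedyForest (mem_sdiff.1 he).1 (mem_sdiff.1 he).2
        · have hconn' : G.ConnectsAll (T ∪ S) := fun u v => (hconn u v).mono subset_union_left
          refine mem_filter.2 ⟨mem_filter.2 ⟨mem_univ _, hconn'⟩,
            greedyForest_eq hT subset_union_left fun e he heT => ?_⟩
          exact (mem_filter.1 (mem_powerset.1 hS ((mem_union.1 he).resolve_left heT))).2
    _ = ∑ S ∈ (G.extActives T).powerset, (∏ e ∈ T, γ e) * ∏ e ∈ S, γ e :=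
        sum_congr rfl fun S hS => prod_union (hdisj S hS)
    _ = _ := by rw [← mul_sum, prod_one_add]

end MGraph

theorem coeff_one_ZT_spanning_tree_general {V E R : Type} [Fintype E] [Nonempty V]
    [LinearOrder E] [CommRing R] (H : MGraph V E)
    (γ : E → R) :
    (H.ZT γ).coeff 1 =
      ∑ T ∈ Finset.univ.filter (fun T => H.IsForest T ∧ H.ConnectsAll T),
        (∏ e ∈ T, γ e) * ∏ e ∈ H.extActives T, (1 + γ e) := by
  have hmaps : ∀ A ∈ univ.filter H.ConnectsAll,
      H.greedyForest A ∈ univ.filter fun T => H.IsForest T ∧ H.ConnectsAll T := fun A hA =>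
    mem_filter.2 ⟨mem_univ _, H.isForest_greedyForest A, (mem_filter.1 hA).2.greedyForest⟩
  rw [H.coeff_one_ZT, ← sum_fiberwise_of_maps_to hmaps]
  exact sum_congr rfl fun T hT =>
    MGraph.sum_prod_filter_greedyForest_eq (mem_filter.1 hT).2.1 (mem_filter.1 hT).2.2 γ

/-- For a connected graph `H` with linearly ordered edges,
`[q^1] Z_T(H;q,γ) = Σ_{T∈𝒯(H)} (∏_{e∈T} γ_e)(∏_{e∈EA(T)} (1+γ_e))`. -/
theorem coeff_one_ZT_spanning_tree {V E R : Type} [Fintype V] [Fintype E] [Nonempty V]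
    [LinearOrder E] [CommRing R] (H : MGraph V E) (hconn : H.ConnectsAll Finset.univ)
    (γ : E → R) :
    (H.ZT γ).coeff 1 =
      ∑ T ∈ Finset.univ.filter (fun T => H.IsForest T ∧ H.ConnectsAll T),
        (∏ e ∈ T, γ e) * ∏ e ∈ H.extActives T, (1 + γ e) :=
  coeff_one_ZT_spanning_tree_general H γ
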